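/- arXiv:1912.02300 — 2 statements merged into one kernel-verified Lean document; each statement's English description precedes it below -/
import Mathlib

section
/- Let s^1,…,s^k be time series with s^l ∈ ℝ^{m_l}, let n ≥ 1, and let P_1,…,P_k be warping paths where P_l has order m_l×n. Then for every j ∈ {1,…,n}, the denominator ∑_{l=1}^k |{i : (i,j) ∈ V(P_l)}| is at least k (in particular positive), and the value (∑_{l=1}^k ∑_{i : (i,j)∈V(P_l)} s^l_i) / (∑_{l=1}^k |{i : (i,j)∈V(P_l)}|) lies in the interval [lb^imp, ub^imp]. -/
/-- A warping path of order `m × n`: a finite sequence of pairs of positive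
integers starting at `(1,1)`, ending at `(m,n)`, each step increasing the
coordinates by `(1,0)`, `(0,1)` or `(1,1)`. -/
structure WarpingPath (m n : ℕ) where
  len : ℕ
  len_pos : 0 < len
  pt : ℕ → ℕ × ℕ
  first : pt 0 = (1, 1)
  last : pt (len - 1) = (m, n)
  step : ∀ t, t + 1 < len →
    pt (t + 1) = ((pt t).1 + 1, (pt t).2) ∨
    pt (t + 1) = ((pt t).1, (pt t).2 + 1) ∨
    pt (t + 1) = ((pt t).1 + 1, (pt t).2 + 1)

/-- The set of vertices `V(P)` of a warping path. -/
def WarpingPath.V {m n : ℕ} (P : WarpingPath m n) : Finset (ℕ × ℕ) :=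
  (Finset.range P.len).image P.pt

/-- The cost `C_P(s, s') = ∑_{(i,j) ∈ V(P)} (s_i − s'_j)²` of a warping path. -/
noncomputable def WarpingPath.cost {m n : ℕ} (P : WarpingPath m n) (s s' : ℕ → ℝ) : ℝ :=
  ∑ v ∈ P.V, (s v.1 - s' v.2) ^ 2

/-- The dtw-distance between a time series `s` of length `m` and a time series
`s'` of length `n`: the minimum over all warping paths `P` of order `m × n` of
`√(C_P(s, s'))`. -/
noncomputable def dtw (m n : ℕ) (s s' : ℕ → ℝ) : ℝ :=
  Real.sqrt (sInf {c : ℝ | ∃ P : WarpingPath m n, c = P.cost s s'})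

/-- `ubImp k m s` is the improved upper bound `ub^imp`: the maximum, over all
admissible interval tuples `(I_1, …, I_k)` with `I_l = [a_l, b_l] ⊆ [1, m_l]`,
of `(∑_l ∑_{i ∈ I_l} s^l_i) / (∑_l |I_l|)`. -/
noncomputable def ubImp (k : ℕ) (m : Fin k → ℕ) (s : Fin k → ℕ → ℝ) : ℝ :=
  sSup {r : ℝ | ∃ a b : Fin k → ℕ, (∀ l, 1 ≤ a l ∧ a l ≤ b l ∧ b l ≤ m l) ∧
    r = (∑ l : Fin k, ∑ i ∈ Finset.Icc (a l) (b l), s l i) /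
        (∑ l : Fin k, ((Finset.Icc (a l) (b l)).card : ℝ))}

/-- `lbImp k m s` is the improved lower bound `lb^imp`, the analogous minimum. -/
noncomputable def lbImp (k : ℕ) (m : Fin k → ℕ) (s : Fin k → ℕ → ℝ) : ℝ :=
  sInf {r : ℝ | ∃ a b : Fin k → ℕ, (∀ l, 1 ≤ a l ∧ a l ≤ b l ∧ b l ≤ m l) ∧
    r = (∑ l : Fin k, ∑ i ∈ Finset.Icc (a l) (b l), s l i) /
        (∑ l : Fin k, ((Finset.Icc (a l) (b l)).card : ℝ))}

/-
For a fixed column `j`, the vertices of a warping path lying in that column form a nonempty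
contiguous block `{(i, j) : a ≤ i ≤ b}` with `1 ≤ a ≤ b ≤ m`: the path is monotone in the
product order and moves by unit steps, so a discrete intermediate value argument fills every gap.
Hence the column average is the ratio attached to an admissible interval tuple; these ratios form
a finite set whose infimum and supremum are `lb^imp` and `ub^imp`, and each block contributes at
least one vertex to the denominator.
-/

theorem Nat.exists_mem_Icc_eq_of_le_add_one {f : ℕ → ℕ} {lo hi c : ℕ} (hle : lo ≤ hi)
    (hstep : ∀ t, lo ≤ t → t < hi → f (t + 1) ≤ f t + 1) (hlo : f lo ≤ c)
    (hhi : c ≤ f hi) :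
    ∃ t ∈ Set.Icc lo hi, f t = c := by
  induction hi, hle using Nat.le_induction with
  | base => exact ⟨lo, ⟨le_rfl, le_rfl⟩, le_antisymm hlo hhi⟩
  | succ hi hle ih =>
    by_cases hc : c ≤ f hi
    · obtain ⟨t, ⟨hlot, hthi⟩, rfl⟩ := ih (fun t h1 h2 => hstep t h1 (by omega)) hc
      exact ⟨t, ⟨hlot, by omega⟩, rfl⟩
    · have := hstep hi hle (by omega)
      exact ⟨hi + 1, ⟨by omega, le_rfl⟩, by omega⟩

namespace WarpingPath

variable {m n : ℕ} (P : WarpingPath m n)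

lemma mem_V {v : ℕ × ℕ} : v ∈ P.V ↔ ∃ t < P.len, P.pt t = v := by
  simp [V]

lemma pt_le_pt_succ {t : ℕ} (ht : t + 1 < P.len) : P.pt t ≤ P.pt (t + 1) := by
  rcases P.step t ht with h | h | h <;> simp [h, Prod.le_def]

lemma pt_succ_le {t : ℕ} (ht : t + 1 < P.len) :
    (P.pt (t + 1)).1 ≤ (P.pt t).1 + 1 ∧ (P.pt (t + 1)).2 ≤ (P.pt t).2 + 1 := by
  rcases P.step t ht with h | h | h <;> rw [h] <;> simp

lemma monotoneOn_pt : MonotoneOn P.pt (Set.Iio P.len) :=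
  monotoneOn_of_le_add_one Set.ordConnected_Iio fun _ _ _ ht => P.pt_le_pt_succ ht

lemma mem_V_le {v : ℕ × ℕ} (hv : v ∈ P.V) : (1, 1) ≤ v ∧ v ≤ (m, n) := by
  obtain ⟨t, ht, rfl⟩ := P.mem_V.1 hv
  rw [← P.first, ← P.last]
  have := P.len_pos
  exact ⟨P.monotoneOn_pt (Set.mem_Iio.2 this) ht (Nat.zero_le t),
    P.monotoneOn_pt ht (Set.mem_Iio.2 (by omega)) (by omega)⟩

lemma exists_mem_V_snd_eq {j : ℕ} (hj1 : 1 ≤ j) (hjn : j ≤ n) : ∃ i, (i, j) ∈ P.V := by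
  obtain ⟨t, ⟨-, ht⟩, htj⟩ := Nat.exists_mem_Icc_eq_of_le_add_one
    (f := fun t => (P.pt t).2) (c := j) (Nat.zero_le (P.len - 1))
    (fun t _ ht => (P.pt_succ_le (by omega)).2) (by simp [P.first, hj1]) (by simp [P.last, hjn])
  have := P.len_pos
  exact ⟨(P.pt t).1, P.mem_V.2 ⟨t, by omega, Prod.ext rfl htj⟩⟩

lemma mem_V_of_mem_Icc {i i' i'' j : ℕ} (hi : (i, j) ∈ P.V) (hi' : (i', j) ∈ P.V)
    (h : i'' ∈ Set.Icc i i') : (i'', j) ∈ P.V := by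
  obtain ⟨t, ht, hti⟩ := P.mem_V.1 hi
  obtain ⟨t', ht', hti'⟩ := P.mem_V.1 hi'
  rcases le_total t t' with htt' | htt'
  · have hcol : ∀ u ∈ Set.Icc t t', (P.pt u).2 = j := fun u hu => by
      have h1 := P.monotoneOn_pt ht (hu.2.trans_lt ht') hu.1
      have h2 := P.monotoneOn_pt (hu.2.trans_lt ht') ht' hu.2
      rw [hti] at h1
      rw [hti'] at h2
      exact le_antisymm h2.2 h1.2
    obtain ⟨u, hu, hui⟩ := Nat.exists_mem_Icc_eq_of_le_add_one
      (f := fun u => (P.pt u).1) (c := i'') htt'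
      (fun u _ hu => (P.pt_succ_le (by omega)).1) (by simp [hti, h.1]) (by simp [hti', h.2])
    exact P.mem_V.2 ⟨u, hu.2.trans_lt ht', Prod.ext hui (hcol u hu)⟩
  · -- the path meets `(i', j)` before `(i, j)`, so `i' ≤ i` and the interval is a single point
    have := (Prod.mk_le_mk.1 (hti' ▸ hti ▸ P.monotoneOn_pt ht' ht htt')).1
    obtain rfl : i'' = i := by have := h.1; have := h.2; omega
    exact hi

lemma exists_filter_snd_eq_image_Icc {j : ℕ} (hj1 : 1 ≤ j) (hjn : j ≤ n) :
    ∃ a b, 1 ≤ a ∧ a ≤ b ∧ b ≤ m ∧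
      P.V.filter (fun v => v.2 = j) = (Finset.Icc a b).image (fun i => (i, j)) := by
  set C := (P.V.filter (fun v => v.2 = j)).image Prod.fst
  have hC : ∀ i, i ∈ C ↔ (i, j) ∈ P.V := by simp [C]
  obtain ⟨i, hi⟩ := P.exists_mem_V_snd_eq hj1 hjn
  have hne : C.Nonempty := ⟨i, (hC i).2 hi⟩
  have ha := (hC _).1 (C.min'_mem hne)
  have hb := (hC _).1 (C.max'_mem hne)
  refine ⟨C.min' hne, C.max' hne, (P.mem_V_le ha).1.1, C.min'_le _ (C.max'_mem hne),
    (P.mem_V_le hb).2.1, ?_⟩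
  ext ⟨i, j'⟩
  simp only [Finset.mem_filter, Finset.mem_image, Finset.mem_Icc, Prod.mk.injEq]
  constructor
  · rintro ⟨hv, rfl⟩
    exact ⟨i, ⟨C.min'_le _ ((hC i).2 hv), C.le_max' _ ((hC i).2 hv)⟩, rfl, rfl⟩
  · rintro ⟨i, hi, rfl, rfl⟩
    exact ⟨P.mem_V_of_mem_Icc ha hb hi, rfl⟩

end WarpingPath

def intervalRatios (k : ℕ) (m : Fin k → ℕ) (s : Fin k → ℕ → ℝ) : Set ℝ :=
  {r : ℝ | ∃ a b : Fin k → ℕ, (∀ l, 1 ≤ a l ∧ a l ≤ b l ∧ b l ≤ m l) ∧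
    r = (∑ l : Fin k, ∑ i ∈ Finset.Icc (a l) (b l), s l i) /
        (∑ l : Fin k, ((Finset.Icc (a l) (b l)).card : ℝ))}

lemma intervalRatios_finite (k : ℕ) (m : Fin k → ℕ) (s : Fin k → ℕ → ℝ) :
    (intervalRatios k m s).Finite := by
  refine (((Set.finite_Iic m).prod (Set.finite_Iic m)).image fun p =>
    (∑ l : Fin k, ∑ i ∈ Finset.Icc (p.1 l) (p.2 l), s l i) /
      (∑ l : Fin k, ((Finset.Icc (p.1 l) (p.2 l)).card : ℝ))).subset ?_
  rintro r ⟨a, b, hab, rfl⟩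
  exact ⟨(a, b), ⟨fun l => (hab l).2.1.trans (hab l).2.2, fun l => (hab l).2.2⟩, rfl⟩

lemma lbImp_le_and_le_ubImp {k : ℕ} {m : Fin k → ℕ} {s : Fin k → ℕ → ℝ} {r : ℝ}
    (hr : r ∈ intervalRatios k m s) : lbImp k m s ≤ r ∧ r ≤ ubImp k m s :=
  ⟨csInf_le (intervalRatios_finite k m s).bddBelow hr,
    le_csSup (intervalRatios_finite k m s).bddAbove hr⟩

theorem stmt8_general (k : ℕ) (m : Fin k → ℕ)
    (s : Fin k → ℕ → ℝ) (n : ℕ)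
    (P : ∀ l : Fin k, WarpingPath (m l) n) (j : ℕ) (hj : j ∈ Finset.Icc 1 n) :
    k ≤ ∑ l : Fin k, ((P l).V.filter (fun v => v.2 = j)).card ∧
    lbImp k m s ≤
      (∑ l : Fin k, ∑ v ∈ (P l).V.filter (fun v => v.2 = j), s l v.1) /
      ((∑ l : Fin k, ((P l).V.filter (fun v => v.2 = j)).card : ℕ) : ℝ) ∧
    (∑ l : Fin k, ∑ v ∈ (P l).V.filter (fun v => v.2 = j), s l v.1) /
      ((∑ l : Fin k, ((P l).V.filter (fun v => v.2 = j)).card : ℕ) : ℝ) ≤ ubImp k m s := by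
  obtain ⟨hj1, hjn⟩ := Finset.mem_Icc.1 hj
  choose a b ha hab hbm hcol using fun l => (P l).exists_filter_snd_eq_image_Icc hj1 hjn
  have hinj : Function.Injective fun i : ℕ => (i, j) := fun _ _ h => (Prod.mk.inj h).1
  have hcard : ∀ l, ((P l).V.filter (fun v => v.2 = j)).card = (Finset.Icc (a l) (b l)).card :=
    fun l => by rw [hcol l, Finset.card_image_of_injective _ hinj]
  have hsum : ∀ l, ∑ v ∈ (P l).V.filter (fun v => v.2 = j), s l v.1 =
      ∑ i ∈ Finset.Icc (a l) (b l), s l i :=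
    fun l => by rw [hcol l, Finset.sum_image fun _ _ _ _ h => hinj h]
  refine ⟨?_, lbImp_le_and_le_ubImp ⟨a, b, fun l => ⟨ha l, hab l, hbm l⟩, ?_⟩⟩
  · calc k = ∑ _l : Fin k, 1 := by simp
      _ ≤ _ := Finset.sum_le_sum fun l _ => by
        rw [hcard l, Nat.card_Icc]
        have := hab l
        omega
  · simp only [hsum, hcard]
    push_cast
    rfl

theorem stmt8 (k : ℕ) (hk : 1 ≤ k) (m : Fin k → ℕ) (hm : ∀ l, 1 ≤ m l)
    (s : Fin k → ℕ → ℝ) (n : ℕ) (hn : 1 ≤ n)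
    (P : ∀ l : Fin k, WarpingPath (m l) n) (j : ℕ) (hj : j ∈ Finset.Icc 1 n) :
    k ≤ ∑ l : Fin k, ((P l).V.filter (fun v => v.2 = j)).card ∧
    lbImp k m s ≤
      (∑ l : Fin k, ∑ v ∈ (P l).V.filter (fun v => v.2 = j), s l v.1) /
      ((∑ l : Fin k, ((P l).V.filter (fun v => v.2 = j)).card : ℕ) : ℝ) ∧
    (∑ l : Fin k, ∑ v ∈ (P l).V.filter (fun v => v.2 = j), s l v.1) /
      ((∑ l : Fin k, ((P l).V.filter (fun v => v.2 = j)).card : ℕ) : ℝ) ≤ ubImp k m s :=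
  stmt8_general k m s n P j hj
end

section
/- Let s^1,…,s^k be time series with s^l ∈ ℝ^{m_l}, and let z ∈ ℝ^L be a mean of s^1,…,s^k, i.e., F(z) ≤ F(z') for every time series z' of any length. Let P_1,…,P_k be optimal warping paths, i.e., P_l has order L×m_l and C_{P_l}(z, s^l) = dtw(z, s^l)². Then for every j ∈ {1,…,L}: z_j = (∑_{l=1}^k ∑_{(j,i)∈V(P_l)} s^l_i) / (∑_{l=1}^k |{i : (j,i) ∈ V(P_l)}|). -/
/-!
Replacing the value `z j` of a mean by any `t`, while keeping the optimal warping paths, cannot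
decrease the total cost, since the warping paths still bound the new dtw-distances from above. Only
the terms of the cost in row `j` depend on `t`, so `z j` minimises the quadratic
`t ↦ ∑ (t - s^l_i)²` over the cells `(j, i)` of all paths; its minimiser is the mean of the `s^l_i`,
and there is at least one such cell because a warping path visits every row.
-/

open Finset

theorem Nat.exists_apply_eq_of_apply_succ_le_add_one (f : ℕ → ℕ) (n : ℕ)
    (hstep : ∀ t, t + 1 ≤ n → f (t + 1) ≤ f t + 1) {j : ℕ} (h0 : f 0 ≤ j) (hn : j ≤ f n) :
    ∃ t ≤ n, f t = j := by
  induction n with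
  | zero => exact ⟨0, le_rfl, le_antisymm h0 hn⟩
  | succ n ih =>
    by_cases h : j ≤ f n
    · obtain ⟨t, ht, hft⟩ := ih (fun t ht => hstep t (ht.trans n.le_succ)) h
      exact ⟨t, ht.trans n.le_succ, hft⟩
    · exact ⟨n + 1, le_rfl, le_antisymm ((hstep n le_rfl).trans (not_le.mp h)) hn⟩

namespace WarpingPath

variable {m n : ℕ} (P : WarpingPath m n)

theorem cost_nonneg (s s' : ℕ → ℝ) : 0 ≤ P.cost s s' :=
  sum_nonneg fun _ _ => sq_nonneg _

theorem exists_mem_V_fst_eq {j : ℕ} (hj1 : 1 ≤ j) (hjm : j ≤ m) : ∃ v ∈ P.V, v.1 = j := by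
  obtain ⟨t, ht, hj⟩ : ∃ t ≤ P.len - 1, (P.pt t).1 = j := by
    refine Nat.exists_apply_eq_of_apply_succ_le_add_one (fun t => (P.pt t).1) _ (fun t ht => ?_)
      (by simp [P.first, hj1]) (by simp [P.last, hjm])
    rcases P.step t (by omega) with h | h | h <;> simp [h]
  exact ⟨P.pt t, mem_image_of_mem _ (mem_range.mpr (by have := P.len_pos; omega)), hj⟩

theorem cost_update (s s' : ℕ → ℝ) (j : ℕ) (t : ℝ) :
    P.cost (Function.update s j t) s' = P.cost s s'
      - ∑ v ∈ P.V.filter (·.1 = j), (s j - s' v.2) ^ 2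
      + ∑ v ∈ P.V.filter (·.1 = j), (t - s' v.2) ^ 2 := by
  have hsplit : ∀ w : ℕ → ℝ, P.cost w s' = ∑ v ∈ P.V.filter (·.1 = j), (w j - s' v.2) ^ 2
      + ∑ v ∈ P.V.filter (·.1 ≠ j), (w v.1 - s' v.2) ^ 2 := fun w => by
    rw [cost, ← sum_filter_add_sum_filter_not P.V (·.1 = j)]
    congr 1
    exact sum_congr rfl fun v hv => by rw [(mem_filter.mp hv).2]
  have hrest : ∑ v ∈ P.V.filter (·.1 ≠ j), (Function.update s j t v.1 - s' v.2) ^ 2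
      = ∑ v ∈ P.V.filter (·.1 ≠ j), (s v.1 - s' v.2) ^ 2 :=
    sum_congr rfl fun v hv => by rw [Function.update_of_ne (mem_filter.mp hv).2]
  rw [hsplit, hsplit s, hrest, Function.update_self]
  ring

end WarpingPath

theorem dtw_sq_le_cost {m n : ℕ} (P : WarpingPath m n) (s s' : ℕ → ℝ) :
    dtw m n s s' ^ 2 ≤ P.cost s s' := by
  set C := {c : ℝ | ∃ Q : WarpingPath m n, c = Q.cost s s'}
  have hlower : ∀ c ∈ C, 0 ≤ c := fun _ ⟨Q, hQ⟩ => hQ ▸ Q.cost_nonneg s s'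
  have hP : P.cost s s' ∈ C := ⟨P, rfl⟩
  rw [dtw, Real.sq_sqrt (le_csInf ⟨_, hP⟩ hlower)]
  exact csInf_le ⟨0, hlower⟩ hP

theorem sum_cost_le_sum_cost_of_sum_dtw_sq_le {ι : Type*} [Fintype ι] {L : ℕ} {m : ι → ℕ}
    {s : ι → ℕ → ℝ} {z z' : ℕ → ℝ} (P : ∀ l, WarpingPath L (m l))
    (hopt : ∀ l, (P l).cost z (s l) = dtw L (m l) z (s l) ^ 2)
    (hle : ∑ l, dtw L (m l) z (s l) ^ 2 ≤ ∑ l, dtw L (m l) z' (s l) ^ 2) :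
    ∑ l, (P l).cost z (s l) ≤ ∑ l, (P l).cost z' (s l) := calc
  ∑ l, (P l).cost z (s l) = ∑ l, dtw L (m l) z (s l) ^ 2 := sum_congr rfl fun l _ => hopt l
  _ ≤ ∑ l, dtw L (m l) z' (s l) ^ 2 := hle
  _ ≤ ∑ l, (P l).cost z' (s l) := sum_le_sum fun l _ => dtw_sq_le_cost (P l) z' (s l)

theorem Finset.eq_sum_div_card_of_forall_sum_sq_sub_le {ι : Type*} {S : Finset ι}
    (hS : S.Nonempty) (a : ι → ℝ) {x : ℝ}
    (hmin : ∀ t, ∑ i ∈ S, (x - a i) ^ 2 ≤ ∑ i ∈ S, (t - a i) ^ 2) :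
    x = (∑ i ∈ S, a i) / #S := by
  have hcard : (0 : ℝ) < #S := by exact_mod_cast hS.card_pos
  set μ := (∑ i ∈ S, a i) / #S
  have hsum : ∑ i ∈ S, a i = #S * μ := (mul_div_cancel₀ _ hcard.ne').symm
  have hexpand : ∀ t, ∑ i ∈ S, (t - a i) ^ 2 = #S * t ^ 2 - 2 * t * ∑ i ∈ S, a i
      + ∑ i ∈ S, a i ^ 2 := fun t => by
    simp only [sub_sq, sum_add_distrib, sum_sub_distrib, sum_const, nsmul_eq_mul, ← mul_sum]
  -- `∑ (x - a i)² = ∑ (μ - a i)² + #S (x - μ)²`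
  have hsq : (x - μ) ^ 2 ≤ 0 := by
    have := hmin μ
    rw [hexpand, hexpand, hsum] at this
    exact nonpos_of_mul_nonpos_right (by nlinarith) hcard
  exact sub_eq_zero.mp (pow_eq_zero_iff two_ne_zero |>.mp (le_antisymm hsq (sq_nonneg _)))

theorem stmt11_general (k : ℕ) (hk : 1 ≤ k) (m : Fin k → ℕ)
    (s : Fin k → ℕ → ℝ) (L : ℕ) (hL : 1 ≤ L) (z : ℕ → ℝ)
    (hmean : ∀ L' : ℕ, 1 ≤ L' → ∀ z' : ℕ → ℝ,
      (1 / (k : ℝ)) * ∑ l : Fin k, (dtw L (m l) z (s l)) ^ 2 ≤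
        (1 / (k : ℝ)) * ∑ l : Fin k, (dtw L' (m l) z' (s l)) ^ 2)
    (P : ∀ l : Fin k, WarpingPath L (m l))
    (hopt : ∀ l : Fin k, (P l).cost z (s l) = (dtw L (m l) z (s l)) ^ 2) :
    ∀ j ∈ Finset.Icc 1 L, z j =
      (∑ l : Fin k, ∑ v ∈ (P l).V.filter (fun v => v.1 = j), s l v.2) /
      ((∑ l : Fin k, ((P l).V.filter (fun v => v.1 = j)).card : ℕ) : ℝ) := by
  intro j hj
  obtain ⟨hj1, hjL⟩ := mem_Icc.mp hj
  set F : ∀ l : Fin k, Finset (ℕ × ℕ) := fun l => (P l).V.filter (·.1 = j)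
  have hmin : ∀ t : ℝ, ∑ x ∈ univ.sigma F, (z j - s x.1 x.2.2) ^ 2
      ≤ ∑ x ∈ univ.sigma F, (t - s x.1 x.2.2) ^ 2 := fun t => by
    have hle := sum_cost_le_sum_cost_of_sum_dtw_sq_le (z' := Function.update z j t) P hopt
      (le_of_mul_le_mul_left (hmean L hL _) (by positivity))
    simp only [WarpingPath.cost_update, sum_add_distrib, sum_sub_distrib] at hle
    rw [sum_sigma, sum_sigma]
    linarith
  obtain ⟨v, hv, hvj⟩ := (P ⟨0, hk⟩).exists_mem_V_fst_eq hj1 hjL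
  have hne : (univ.sigma F).Nonempty :=
    ⟨⟨⟨0, hk⟩, v⟩, mem_sigma.mpr ⟨mem_univ _, mem_filter.mpr ⟨hv, hvj⟩⟩⟩
  have := eq_sum_div_card_of_forall_sum_sq_sub_le hne (fun x => s x.1 x.2.2) hmin
  rwa [sum_sigma, card_sigma] at this

theorem stmt11 (k : ℕ) (hk : 1 ≤ k) (m : Fin k → ℕ) (hm : ∀ l, 1 ≤ m l)
    (s : Fin k → ℕ → ℝ) (L : ℕ) (hL : 1 ≤ L) (z : ℕ → ℝ)
    (hmean : ∀ L' : ℕ, 1 ≤ L' → ∀ z' : ℕ → ℝ,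
      (1 / (k : ℝ)) * ∑ l : Fin k, (dtw L (m l) z (s l)) ^ 2 ≤
        (1 / (k : ℝ)) * ∑ l : Fin k, (dtw L' (m l) z' (s l)) ^ 2)
    (P : ∀ l : Fin k, WarpingPath L (m l))
    (hopt : ∀ l : Fin k, (P l).cost z (s l) = (dtw L (m l) z (s l)) ^ 2) :
    ∀ j ∈ Finset.Icc 1 L, z j =
      (∑ l : Fin k, ∑ v ∈ (P l).V.filter (fun v => v.1 = j), s l v.2) /
      ((∑ l : Fin k, ((P l).V.filter (fun v => v.1 = j)).card : ℕ) : ℝ) :=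
  stmt11_general k hk m s L hL z hmean P hopt
end
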